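/- Let A = [[4, 0], [0, 1]], B = [[5/2, 3/2], [3/2, 5/2]], and C = [[25/8, 3/4], [3/4, 13/8]], viewed as positive definite matrices in M₂(ℂ). Then d_{1/2}(A, B)² − 4·d_{1/2}(A, C)² = 3√34/4 − √17 − 1/4, and this quantity is strictly positive; consequently d_{1/2}(A, B) > 2·d_{1/2}(A, C). -/
import Mathlib


open scoped ComplexOrder

/-- Real power of a square complex matrix, taken via the continuous functional calculus
(on the spectrum, which lies in `[0, ∞)` for positive semidefinite matrices). -/
noncomputable def Matrix.rpowCFC {n : Type*} [Fintype n] [DecidableEq n]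
    (A : Matrix n n ℂ) (r : ℝ) : Matrix n n ℂ :=
  cfc (fun x : ℝ => x ^ r) A

/-- The operation `A κₚ B := (A^{p/4} B^{p/2} A^{p/4})^{1/p}`. -/
noncomputable def Matrix.kappa {n : Type*} [Fintype n] [DecidableEq n]
    (p : ℝ) (A B : Matrix n n ℂ) : Matrix n n ℂ :=
  (A.rpowCFC (p / 4) * B.rpowCFC (p / 2) * A.rpowCFC (p / 4)).rpowCFC p⁻¹

/-- `d_p(X, Y) := (Tr((X + Y)/2 − X κₚ Y))^{1/2}` (the trace inside is a nonnegative real). -/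
noncomputable def Matrix.dp {n : Type*} [Fintype n] [DecidableEq n]
    (p : ℝ) (X Y : Matrix n n ℂ) : ℝ :=
  Real.sqrt ((Matrix.trace ((2 : ℂ)⁻¹ • (X + Y) - Matrix.kappa p X Y)).re)

abbrev Mat := Matrix (Fin 2) (Fin 2) ℂ

lemma contOnSpec (f : ℝ → ℝ) (A : Mat) : ContinuousOn f (spectrum ℝ A) := by
  rw [continuousOn_iff_continuous_restrict]
  have : Finite (spectrum ℝ A) := A.finite_real_spectrum
  exact continuous_of_discreteTopology

lemma spec_subset {M : Mat} {a b : ℝ}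
    (hq : (M - a • 1) * (M - b • 1) = 0) :
    ∀ x ∈ spectrum ℝ M, x = a ∨ x = b := by
  have hMM : M * M = (a + b) • M - (a * b) • 1 := by
    have h : (M - a • 1) * (M - b • 1)
        = M * M - ((a + b) • M - (a * b) • 1) := by
      simp only [sub_mul, mul_sub, smul_mul_assoc, mul_smul_comm, smul_smul, one_mul,
        mul_one, add_smul, smul_sub]
      module
    rw [h] at hq
    exact sub_eq_zero.mp hq
  intro x hx
  by_contra hcon
  push_neg at hcon
  obtain ⟨hxa, hxb⟩ := hcon
  have hc : (x - a) * (x - b) ≠ 0 :=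
    mul_ne_zero (sub_ne_zero.mpr hxa) (sub_ne_zero.mpr hxb)
  apply spectrum.notMem_iff.mpr ?_ hx
  rw [Algebra.algebraMap_eq_smul_one]
  have key : (x • 1 - M) * (M - (a + b - x) • 1) = ((x - a) * (x - b)) • 1 := by
    have h2 : (x • 1 - M) * (M - (a + b - x) • 1)
        = x • M - (x * (a + b - x)) • 1 - M * M + (a + b - x) • M := by
      simp only [sub_mul, mul_sub, smul_mul_assoc, mul_smul_comm, smul_smul, one_mul,
        mul_one, smul_sub]
      module
    rw [h2, hMM]
    module
  have key' : (M - (a + b - x) • 1) * (x • 1 - M) = ((x - a) * (x - b)) • 1 := by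
    have h2 : (M - (a + b - x) • 1) * (x • 1 - M)
        = x • M - (x * (a + b - x)) • 1 - M * M + (a + b - x) • M := by
      simp only [sub_mul, mul_sub, smul_mul_assoc, mul_smul_comm, smul_smul, one_mul,
        mul_one, smul_sub]
      module
    rw [h2, hMM]
    module
  refine ⟨⟨x • 1 - M, ((x - a) * (x - b))⁻¹ • (M - (a + b - x) • 1), ?_, ?_⟩, rfl⟩
  · rw [mul_smul_comm, key, smul_smul, inv_mul_cancel₀ hc, one_smul]
  · rw [smul_mul_assoc, key', smul_smul, inv_mul_cancel₀ hc, one_smul]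

lemma cfc_eq_lin {M : Mat} (hM : IsSelfAdjoint M) {a b : ℝ} (hab : a ≠ b)
    (hq : (M - a • 1) * (M - b • 1) = 0) (f : ℝ → ℝ) :
    cfc f M = ((f b - f a) / (b - a)) • M + ((b * f a - a * f b) / (b - a)) • 1 := by
  have hba : b - a ≠ 0 := sub_ne_zero.mpr (Ne.symm hab)
  have key : (spectrum ℝ M).EqOn f
      (fun x => ((f b - f a) / (b - a)) * x + ((b * f a - a * f b) / (b - a))) := by
    intro x hx
    rcases spec_subset hq x hx with rfl | rfl
    · field_simp
      ring
    · field_simp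
      ring
  calc cfc f M
      = cfc (fun x => ((f b - f a) / (b - a)) * x + ((b * f a - a * f b) / (b - a))) M :=
        cfc_congr key
    _ = cfc (fun x => ((f b - f a) / (b - a)) * x) M
          + cfc (fun _ => ((b * f a - a * f b) / (b - a))) M :=
        cfc_add M _ _ (by fun_prop) (by fun_prop)
    _ = ((f b - f a) / (b - a)) • M + ((b * f a - a * f b) / (b - a)) • 1 := by
        rw [cfc_const_mul _ _ _ (by fun_prop), cfc_id' ℝ M hM, cfc_const _ _ hM,
          Algebra.algebraMap_eq_smul_one]
open scoped ComplexOrder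
noncomputable def r2 : ℝ := Real.sqrt 2
noncomputable def s : ℝ := Real.sqrt r2
noncomputable def gp : ℝ := Real.sqrt (6 + r2)
noncomputable def gm : ℝ := Real.sqrt (6 - r2)

lemma hr2 : r2 ^ 2 = 2 := Real.sq_sqrt (by norm_num)
lemma hr2nn : 0 ≤ r2 := Real.sqrt_nonneg 2
lemma hr2ub : r2 < 1.41422 := by nlinarith [hr2, hr2nn]
lemma hr2lb : 1.41421 < r2 := by nlinarith [hr2, hr2nn]
lemma hs : s ^ 2 = r2 := Real.sq_sqrt hr2nn
lemma hsnn : 0 ≤ s := Real.sqrt_nonneg _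
lemma hgp : gp ^ 2 = 6 + r2 := Real.sq_sqrt (by nlinarith [hr2lb])
lemma hgm : gm ^ 2 = 6 - r2 := Real.sq_sqrt (by nlinarith [hr2ub])
lemma hgpnn : 0 ≤ gp := Real.sqrt_nonneg _
lemma hgmnn : 0 ≤ gm := Real.sqrt_nonneg _
lemma hgpgm : gp * gm = Real.sqrt 34 := by
  rw [gp, gm, ← Real.sqrt_mul (by nlinarith [hr2lb])]
  congr 1
  nlinarith [hr2]
lemma h234 : r2 * Real.sqrt 34 = 2 * Real.sqrt 17 := by
  rw [r2, ← Real.sqrt_mul (by norm_num), show (2:ℝ) * 34 = 68 by norm_num,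
    show (68:ℝ) = 2^2 * 17 by norm_num, Real.sqrt_mul (by positivity),
    Real.sqrt_sq (by norm_num)]

lemma rpow_quarter {x y : ℝ} (hy : 0 ≤ y) (h : y ^ (4:ℕ) = x) : x ^ ((1/2)/2 : ℝ) = y := by
  subst h
  rw [← Real.rpow_natCast y 4, ← Real.rpow_mul hy]
  norm_num
lemma rpow_eighth {x y : ℝ} (hy : 0 ≤ y) (h : y ^ (8:ℕ) = x) : x ^ ((1/2)/4 : ℝ) = y := by
  subst h
  rw [← Real.rpow_natCast y 8, ← Real.rpow_mul hy]
  norm_num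

lemma h4e : (4:ℝ) ^ ((1/2)/4 : ℝ) = s := rpow_eighth hsnn (by
  calc s ^ (8:ℕ) = (s^2)^4 := by ring
  _ = r2^4 := by rw [hs]
  _ = (r2^2)^2 := by ring
  _ = 4 := by rw [hr2]; norm_num)
lemma h1e : (1:ℝ) ^ ((1/2)/4 : ℝ) = 1 := Real.one_rpow _
lemma h4q : (4:ℝ) ^ ((1/2)/2 : ℝ) = r2 := rpow_quarter hr2nn (by
  calc r2 ^ (4:ℕ) = (r2^2)^2 := by ring
  _ = 4 := by rw [hr2]; norm_num)
lemma h1q : (1:ℝ) ^ ((1/2)/2 : ℝ) = 1 := Real.one_rpow _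
lemma hgmq : ((19 - 6*r2)/8 : ℝ) ^ ((1/2)/2 : ℝ) = gm/2 := by
  refine rpow_quarter (y := gm/2) (by linarith [hgmnn]) ?_
  have h1 : gm^2 = 6 - r2 := hgm
  have h2 : r2^2 = 2 := hr2
  nlinarith [h1, h2]
lemma hgpq : ((19 + 6*r2)/8 : ℝ) ^ ((1/2)/2 : ℝ) = gp/2 := by
  refine rpow_quarter (y := gp/2) (by linarith [hgpnn]) ?_
  nlinarith [hgp, hr2]

lemma saMat (x y z : ℝ) : IsSelfAdjoint (!![(x:ℂ), (y:ℂ); (y:ℂ), (z:ℂ)]) := by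
  rw [isSelfAdjoint_iff, Matrix.star_eq_conjTranspose]
  ext i j
  fin_cases i <;> fin_cases j <;>
    simp [Matrix.conjTranspose_apply, Complex.conj_ofReal]

noncomputable def c1 : ℝ := r2 * (gp - gm) / 6
noncomputable def c0 : ℝ := r2 * ((19 + 6*r2) * gm - (19 - 6*r2) * gp) / 48

lemma hc1sq : c1 ^ 2 = (6 - Real.sqrt 34) / 9 := by
  unfold c1
  linear_combination ((gp - gm)^2/36) * hr2 + (1/18) * hgp + (1/18) * hgm - (1/9) * hgpgm

lemma hc1c0 : c1 * c0 = (19 * Real.sqrt 34 - 102) / 72 := by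
  have e : c1 * c0 = (gp - gm) * ((19 + 6*r2) * gm - (19 - 6*r2) * gp) / 144 := by
    unfold c1 c0
    linear_combination ((gp - gm) * ((19 + 6*r2) * gm - (19 - 6*r2) * gp) / 288) * hr2
  linear_combination e + (19/72) * hgpgm - ((19 - 6*r2)/144) * hgp - ((19 + 6*r2)/144) * hgm
    + (1/12) * hr2

lemma hc0sq : c0 ^ 2 = (2142 - 289 * Real.sqrt 34) / 576 := by
  have e0 : c0 ^ 2 = ((19 + 6*r2) * gm - (19 - 6*r2) * gp) ^ 2 / 1152 := by
    unfold c0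
    linear_combination (((19 + 6*r2) * gm - (19 - 6*r2) * gp) ^ 2 / 2304) * hr2
  linear_combination e0 + ((19 + 6*r2)^2/1152) * hgm + ((19 - 6*r2)^2/1152) * hgp
    - ((361 - 36*r2^2)/576) * hgpgm + ((3 * Real.sqrt 34 - 1)/48) * hr2

lemma saA : IsSelfAdjoint (!![4,0;0,1] : Mat) := by
  have h : (!![4,0;0,1] : Mat) = !![((4:ℝ):ℂ),((0:ℝ):ℂ);((0:ℝ):ℂ),((1:ℝ):ℂ)] := by
    ext i j; fin_cases i <;> fin_cases j <;> norm_num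
  rw [h]; exact saMat 4 0 1

lemma saB : IsSelfAdjoint (!![5/2,3/2;3/2,5/2] : Mat) := by
  have h : (!![5/2,3/2;3/2,5/2] : Mat)
      = !![((5/2:ℝ):ℂ),((3/2:ℝ):ℂ);((3/2:ℝ):ℂ),((5/2:ℝ):ℂ)] := by
    ext i j; fin_cases i <;> fin_cases j <;> norm_num
  rw [h]; exact saMat _ _ _

lemma saC : IsSelfAdjoint (!![25/8,3/4;3/4,13/8] : Mat) := by
  have h : (!![25/8,3/4;3/4,13/8] : Mat)
      = !![((25/8:ℝ):ℂ),((3/4:ℝ):ℂ);((3/4:ℝ):ℂ),((13/8:ℝ):ℂ)] := by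
    ext i j; fin_cases i <;> fin_cases j <;> norm_num
  rw [h]; exact saMat _ _ _

lemma qA : ((!![4,0;0,1] : Mat) - (1:ℝ) • 1) * ((!![4,0;0,1] : Mat) - (4:ℝ) • 1) = 0 := by
  ext i j
  fin_cases i <;> fin_cases j <;>
    simp [Matrix.mul_apply, Fin.sum_univ_two, Matrix.sub_apply, Matrix.smul_apply,
      Matrix.one_apply, Complex.real_smul] <;> ring

lemma qB : ((!![5/2,3/2;3/2,5/2] : Mat) - (1:ℝ) • 1)
    * ((!![5/2,3/2;3/2,5/2] : Mat) - (4:ℝ) • 1) = 0 := by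
  ext i j
  fin_cases i <;> fin_cases j <;>
    simp [Matrix.mul_apply, Fin.sum_univ_two, Matrix.sub_apply, Matrix.smul_apply,
      Matrix.one_apply, Complex.real_smul] <;> ring

lemma hr2C : ((r2:ℂ)) ^ 2 = 2 := by exact_mod_cast hr2
lemma hsC : ((s:ℂ)) ^ 2 = (r2:ℂ) := by exact_mod_cast hs

lemma qC : ((!![25/8,3/4;3/4,13/8] : Mat) - ((19-6*r2)/8 : ℝ) • 1)
    * ((!![25/8,3/4;3/4,13/8] : Mat) - ((19+6*r2)/8 : ℝ) • 1) = 0 := by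
  ext i j
  fin_cases i <;> fin_cases j <;>
    simp [Matrix.mul_apply, Fin.sum_univ_two, Matrix.sub_apply, Matrix.smul_apply,
      Matrix.one_apply, Complex.real_smul] <;> push_cast
  · linear_combination (-(9:ℂ)/16) * hr2C
  · ring
  · ring
  · linear_combination (-(9:ℂ)/16) * hr2C

lemma A8_eq : (!![4,0;0,1] : Mat).rpowCFC (1/2/4) = !![(s:ℂ), 0; 0, 1] := by
  rw [Matrix.rpowCFC, cfc_eq_lin saA (show (1:ℝ) ≠ 4 by norm_num) qA]
  simp only [h4e, h1e]
  ext i j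
  fin_cases i <;> fin_cases j <;>
    simp [Matrix.add_apply, Matrix.smul_apply, Matrix.one_apply, Complex.real_smul] <;>
    push_cast <;> ring

lemma B4_eq : (!![5/2,3/2;3/2,5/2] : Mat).rpowCFC (1/2/2)
    = !![(((r2+1)/2 : ℝ):ℂ), (((r2-1)/2 : ℝ):ℂ); (((r2-1)/2 : ℝ):ℂ), (((r2+1)/2 : ℝ):ℂ)] := by
  rw [Matrix.rpowCFC, cfc_eq_lin saB (show (1:ℝ) ≠ 4 by norm_num) qB]
  simp only [h4q, h1q]
  ext i j
  fin_cases i <;> fin_cases j <;>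
    simp [Matrix.add_apply, Matrix.smul_apply, Matrix.one_apply, Complex.real_smul] <;>
    push_cast <;> ring

lemma hr2pos : 0 < r2 := by nlinarith [hr2lb]

lemma hdne : ((19+6*r2)/8 : ℝ) - (19-6*r2)/8 ≠ 0 := by nlinarith [hr2pos]

lemma hcoef1 : (gp/2 - gm/2)/((19+6*r2)/8 - (19-6*r2)/8) = c1 := by
  rw [div_eq_iff hdne, c1]
  linear_combination (-(gp - gm)/4) * hr2

lemma hcoef0 : (((19+6*r2)/8) * (gm/2) - ((19-6*r2)/8) * (gp/2))
    / ((19+6*r2)/8 - (19-6*r2)/8) = c0 := by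
  rw [div_eq_iff hdne, c0]
  linear_combination (-((19 + 6*r2) * gm - (19 - 6*r2) * gp)/32) * hr2

lemma C4_eq : (!![25/8,3/4;3/4,13/8] : Mat).rpowCFC (1/2/2)
    = !![((25/8*c1+c0 : ℝ):ℂ), ((3/4*c1 : ℝ):ℂ); ((3/4*c1 : ℝ):ℂ), ((13/8*c1+c0 : ℝ):ℂ)] := by
  rw [Matrix.rpowCFC, cfc_eq_lin saC (show ((19-6*r2)/8 : ℝ) ≠ (19+6*r2)/8 from
    ne_of_lt (by nlinarith [hr2pos])) qC]
  simp only [hgmq, hgpq, hcoef1, hcoef0]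
  ext i j
  fin_cases i <;> fin_cases j <;>
    simp [Matrix.add_apply, Matrix.smul_apply, Matrix.one_apply, Complex.real_smul] <;>
    push_cast <;> ring

lemma PB_eq : !![(s:ℂ), 0; 0, 1]
      * !![(((r2+1)/2 : ℝ):ℂ), (((r2-1)/2 : ℝ):ℂ); (((r2-1)/2 : ℝ):ℂ), (((r2+1)/2 : ℝ):ℂ)]
      * !![(s:ℂ), 0; 0, 1]
    = !![((r2*((r2+1)/2) : ℝ):ℂ), ((s*((r2-1)/2) : ℝ):ℂ);
        ((s*((r2-1)/2) : ℝ):ℂ), (((r2+1)/2 : ℝ):ℂ)] := by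
  ext i j
  fin_cases i <;> fin_cases j <;>
    simp [Matrix.mul_apply, Fin.sum_univ_two] <;> push_cast
  · linear_combination (((r2:ℂ)+1)/2) * hsC
  · ring

lemma PC_eq : !![(s:ℂ), 0; 0, 1]
      * !![((25/8*c1+c0 : ℝ):ℂ), ((3/4*c1 : ℝ):ℂ); ((3/4*c1 : ℝ):ℂ), ((13/8*c1+c0 : ℝ):ℂ)]
      * !![(s:ℂ), 0; 0, 1]
    = !![((r2*(25/8*c1+c0) : ℝ):ℂ), ((s*(3/4*c1) : ℝ):ℂ);
        ((s*(3/4*c1) : ℝ):ℂ), ((13/8*c1+c0 : ℝ):ℂ)] := by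
  ext i j
  fin_cases i <;> fin_cases j <;>
    simp [Matrix.mul_apply, Fin.sum_univ_two] <;> push_cast
  · linear_combination ((25/8*(c1:ℂ)+(c0:ℂ))) * hsC
  · ring

lemma rpow_two_sa {M : Mat} (hM : IsSelfAdjoint M) : M.rpowCFC (1/2 : ℝ)⁻¹ = M * M := by
  rw [Matrix.rpowCFC]
  have h : (fun x : ℝ => x ^ ((1/2 : ℝ)⁻¹)) = fun x : ℝ => x ^ (2:ℕ) := by
    ext x
    rw [show ((1/2 : ℝ))⁻¹ = ((2:ℕ):ℝ) by norm_num, Real.rpow_natCast]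
  rw [h, cfc_pow_id M 2 hM, sq]

lemma kappaB : Matrix.kappa (1/2) (!![4,0;0,1] : Mat) !![5/2,3/2;3/2,5/2]
    = !![((r2*((r2+1)/2) : ℝ):ℂ), ((s*((r2-1)/2) : ℝ):ℂ);
        ((s*((r2-1)/2) : ℝ):ℂ), (((r2+1)/2 : ℝ):ℂ)]
      * !![((r2*((r2+1)/2) : ℝ):ℂ), ((s*((r2-1)/2) : ℝ):ℂ);
        ((s*((r2-1)/2) : ℝ):ℂ), (((r2+1)/2 : ℝ):ℂ)] := by
  rw [Matrix.kappa, A8_eq, B4_eq, PB_eq, rpow_two_sa (saMat _ _ _)]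

lemma kappaC : Matrix.kappa (1/2) (!![4,0;0,1] : Mat) !![25/8,3/4;3/4,13/8]
    = !![((r2*(25/8*c1+c0) : ℝ):ℂ), ((s*(3/4*c1) : ℝ):ℂ);
        ((s*(3/4*c1) : ℝ):ℂ), ((13/8*c1+c0 : ℝ):ℂ)]
      * !![((r2*(25/8*c1+c0) : ℝ):ℂ), ((s*(3/4*c1) : ℝ):ℂ);
        ((s*(3/4*c1) : ℝ):ℂ), ((13/8*c1+c0 : ℝ):ℂ)] := by
  rw [Matrix.kappa, A8_eq, C4_eq, PC_eq, rpow_two_sa (saMat _ _ _)]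

lemma traceB : (Matrix.trace ((2 : ℂ)⁻¹ • ((!![4,0;0,1] : Mat) + !![5/2,3/2;3/2,5/2])
      - Matrix.kappa (1/2) (!![4,0;0,1] : Mat) !![5/2,3/2;3/2,5/2])).re
    = (19 - 12*r2)/4 := by
  rw [kappaB]
  rw [show (Matrix.trace ((2 : ℂ)⁻¹ • ((!![4,0;0,1] : Mat) + !![5/2,3/2;3/2,5/2])
      - _)) = (((19 - 12*r2)/4 : ℝ) : ℂ) from ?_, Complex.ofReal_re]
  rw [Matrix.trace_fin_two]
  simp [Matrix.sub_apply, Matrix.smul_apply, Matrix.add_apply, Matrix.mul_apply,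
    Fin.sum_univ_two]
  push_cast
  linear_combination (-(((r2:ℂ)-1)/2)^2*2) * hsC + (-(r2:ℂ) - (r2:ℂ)^2/4) * hr2C

lemma hc1sqC : ((c1:ℂ)) ^ 2 = (6 - (Real.sqrt 34 : ℝ)) / 9 := by exact_mod_cast hc1sq
lemma hc1c0C : (c1:ℂ) * (c0:ℂ) = (19 * (Real.sqrt 34 : ℝ) - 102) / 72 := by exact_mod_cast hc1c0
lemma hc0sqC : ((c0:ℂ)) ^ 2 = (2142 - 289 * (Real.sqrt 34 : ℝ)) / 576 := by exact_mod_cast hc0sq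
lemma h234C : (r2:ℂ) * (Real.sqrt 34 : ℝ) = 2 * (Real.sqrt 17 : ℝ) := by exact_mod_cast h234

lemma traceC : (Matrix.trace ((2 : ℂ)⁻¹ • ((!![4,0;0,1] : Mat) + !![25/8,3/4;3/4,13/8])
      - Matrix.kappa (1/2) (!![4,0;0,1] : Mat) !![25/8,3/4;3/4,13/8])).re
    = (20 - 3*Real.sqrt 34 - 12*r2 + 4*Real.sqrt 17)/16 := by
  rw [kappaC]
  rw [show (Matrix.trace ((2 : ℂ)⁻¹ • ((!![4,0;0,1] : Mat) + !![25/8,3/4;3/4,13/8])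
      - _)) = (((20 - 3*Real.sqrt 34 - 12*r2 + 4*Real.sqrt 17)/16 : ℝ) : ℂ) from ?_,
    Complex.ofReal_re]
  rw [Matrix.trace_fin_two]
  simp [Matrix.sub_apply, Matrix.smul_apply, Matrix.add_apply, Matrix.mul_apply,
    Fin.sum_univ_two]
  push_cast
  linear_combination (-2*(3/4*(c1:ℂ))^2) * hsC + (-(25/8*(c1:ℂ)+(c0:ℂ))^2) * hr2C
    + (-(1419:ℂ)/64 - 9/8*(r2:ℂ)) * hc1sqC + (-(63:ℂ)/4) * hc1c0C + (-3 : ℂ) * hc0sqC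
    + ((1:ℂ)/8) * h234C

/-- `d_{1/2}(A, B)² − 4·d_{1/2}(A, C)² = 3√34/4 − √17 − 1/4 > 0`, hence
`d_{1/2}(A, B) > 2·d_{1/2}(A, C)`, for the explicit matrices `A, B, C`. -/
theorem d_half_AB_gt_two_d_half_AC :
    Matrix.dp (1 / 2) (!![4, 0; 0, 1] : Matrix (Fin 2) (Fin 2) ℂ)
          !![5/2, 3/2; 3/2, 5/2] ^ 2 -
        4 * Matrix.dp (1 / 2) (!![4, 0; 0, 1] : Matrix (Fin 2) (Fin 2) ℂ)
          !![25/8, 3/4; 3/4, 13/8] ^ 2 =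
        3 * Real.sqrt 34 / 4 - Real.sqrt 17 - 1 / 4 ∧
      0 < 3 * Real.sqrt 34 / 4 - Real.sqrt 17 - 1 / 4 ∧
      2 * Matrix.dp (1 / 2) (!![4, 0; 0, 1] : Matrix (Fin 2) (Fin 2) ℂ)
          !![25/8, 3/4; 3/4, 13/8] <
        Matrix.dp (1 / 2) (!![4, 0; 0, 1] : Matrix (Fin 2) (Fin 2) ℂ)
          !![5/2, 3/2; 3/2, 5/2] := by
  have dB : Matrix.dp (1/2) (!![4,0;0,1] : Mat) !![5/2,3/2;3/2,5/2]
      = Real.sqrt ((19 - 12*r2)/4) := by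
    rw [Matrix.dp, traceB]
  have dC : Matrix.dp (1/2) (!![4,0;0,1] : Mat) !![25/8,3/4;3/4,13/8]
      = Real.sqrt ((20 - 3*Real.sqrt 34 - 12*r2 + 4*Real.sqrt 17)/16) := by
    rw [Matrix.dp, traceC]
  have hu34ub : Real.sqrt 34 < 5.83096 := by
    nlinarith [Real.sq_sqrt (show (0:ℝ) ≤ 34 by norm_num), Real.sqrt_nonneg 34]
  have hu34lb : 5.83095 < Real.sqrt 34 := by
    nlinarith [Real.sq_sqrt (show (0:ℝ) ≤ 34 by norm_num), Real.sqrt_nonneg 34]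
  have hu17ub : Real.sqrt 17 < 4.123106 := by
    nlinarith [Real.sq_sqrt (show (0:ℝ) ≤ 17 by norm_num), Real.sqrt_nonneg 17]
  have hu17lb : 4 < Real.sqrt 17 := by
    nlinarith [Real.sq_sqrt (show (0:ℝ) ≤ 17 by norm_num), Real.sqrt_nonneg 17]
  have hx : (0:ℝ) ≤ (19 - 12*r2)/4 := by linarith [hr2ub]
  have hy : (0:ℝ) ≤ (20 - 3*Real.sqrt 34 - 12*r2 + 4*Real.sqrt 17)/16 := by
    linarith [hr2ub, hu34ub, hu17lb]
  refine ⟨?_, ?_, ?_⟩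
  · rw [dB, dC, Real.sq_sqrt hx, Real.sq_sqrt hy]
    ring
  · linarith [hu34lb, hu17ub]
  · rw [dB, dC]
    have h2y : (2:ℝ) * Real.sqrt ((20 - 3*Real.sqrt 34 - 12*r2 + 4*Real.sqrt 17)/16)
        = Real.sqrt (4 * ((20 - 3*Real.sqrt 34 - 12*r2 + 4*Real.sqrt 17)/16)) := by
      rw [show (4:ℝ) * ((20 - 3*Real.sqrt 34 - 12*r2 + 4*Real.sqrt 17)/16)
          = 2^2 * ((20 - 3*Real.sqrt 34 - 12*r2 + 4*Real.sqrt 17)/16) by ring,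
        Real.sqrt_mul (by norm_num : (0:ℝ) ≤ 2^2),
        Real.sqrt_sq (by norm_num : (0:ℝ) ≤ 2)]
    rw [h2y]
    exact Real.sqrt_lt_sqrt (by linarith) (by linarith [hu34lb, hu17ub])
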